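/- Let p = (p_1, ..., p_s) and q = (q_1, ..., q_{s−1}) be partitions of the same integer such that q is obtained from p by merging two parts: q_{j_0} = p_{i_0} + p_{i_0+1} for some indices, with all other parts identical (as multisets). If z < p_{i_0} + p_{i_0+1}, then d_com^{(z)}(q) < d_com^{(z)}(p) strictly in the dominance order. -/

import Mathlib

namespace PartStmt

/-- Sorted (nonincreasing) list of parts of a partition, represented as a multiset. -/
def parts (m : Multiset ℕ) : List ℕ := (m.sort (· ≤ ·)).reverse

/-- The `i`-th part (0-indexed), with `0` beyond the length. -/
def part (m : Multiset ℕ) (i : ℕ) : ℕ := (parts m).getD i 0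

/-- Partial sum of the `k` largest parts. -/
def psum (m : Multiset ℕ) (k : ℕ) : ℕ := ∑ i ∈ Finset.range k, part m i

/-- Dominance order: every partial sum of `l` is at most that of `m`. -/
def Dom (l m : Multiset ℕ) : Prop := ∀ k, psum l k ≤ psum m k

/-- Strict dominance. -/
def StrictDom (l m : Multiset ℕ) : Prop := Dom l m ∧ l ≠ m

/-- Componentwise sum of two partitions (sorted part sequences added, zero padding). -/
def psAdd (l m : Multiset ℕ) : Multiset ℕ :=
  ((Multiset.range (Multiset.card l + Multiset.card m)).map
    (fun i => part l i + part m i)).filter (0 < ·)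

/-- The transpose (conjugate) partition: the `j`-th column length `#{x ∈ m : x ≥ j+1}`. -/
def transpose (m : Multiset ℕ) : Multiset ℕ :=
  ((Multiset.range m.sum).map
    (fun j => Multiset.card (m.filter (fun x => j + 1 ≤ x)))).filter (0 < ·)

/-- The partition `s(m; z) = (z^a, b)` where `m = a z + b`, `0 ≤ b < z`. -/
def sPart (m z : ℕ) : Multiset ℕ :=
  Multiset.replicate (m / z) z + (if m % z = 0 then 0 else {m % z})

/-- `d_com^{(z)}(p) = Σ_i s(p_i; z)` (componentwise partition sum). -/
def dcom (z : ℕ) (p : Multiset ℕ) : Multiset ℕ :=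
  (parts p).foldr (fun x acc => psAdd (sPart x z) acc) 0

/-- A multiset is a partition when all its parts are positive. -/
def IsPartition (m : Multiset ℕ) : Prop := ∀ x ∈ m, 0 < x

/-! ### Auxiliary lemmas -/

lemma parts_sorted (m : Multiset ℕ) : (parts m).Pairwise (· ≥ ·) := by
  have := Multiset.pairwise_sort m (· ≤ ·)
  exact List.pairwise_reverse.2 (by exact this)

lemma coe_parts (m : Multiset ℕ) : (↑(parts m) : Multiset ℕ) = m := by
  simp [parts, Multiset.sort_eq]

lemma parts_coe {L : List ℕ} (h : L.Pairwise (· ≥ ·)) : parts (↑L) = L := by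
  exact List.Perm.eq_of_pairwise' (parts_sorted _) h (Quotient.exact (coe_parts ↑L))

lemma parts_length (m : Multiset ℕ) : (parts m).length = Multiset.card m := by
  simp [parts]

lemma part_eq_zero {m : Multiset ℕ} {i : ℕ} (h : Multiset.card m ≤ i) : part m i = 0 :=
  List.getD_eq_default _ _ (by rwa [parts_length])

lemma part_antitone (m : Multiset ℕ) : Antitone (part m) := by
  intro i j hij
  by_cases hj : j < (parts m).length
  · have hi : i < (parts m).length := lt_of_le_of_lt hij hj
    rw [part, part, List.getD_eq_getElem _ _ hj, List.getD_eq_getElem _ _ hi]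
    exact (parts_sorted m).rel_get_of_le (a := ⟨i, hi⟩) (b := ⟨j, hj⟩) hij
  · rw [part, List.getD_eq_default _ _ (le_of_not_gt hj)]
    exact Nat.zero_le _

lemma exists_replicate {L : List ℕ} (h : L.Pairwise (· ≥ ·)) :
    ∃ j, L = L.filter (fun x => decide (0 < x)) ++ List.replicate j 0 := by
  induction L with
  | nil => exact ⟨0, rfl⟩
  | cons a t ih =>
    obtain ⟨hhead, htail⟩ := List.pairwise_cons.mp h
    by_cases ha : 0 < a
    · obtain ⟨j, hj⟩ := ih htail
      exact ⟨j, by rw [List.filter_cons_of_pos (by simpa using ha)]; rw [List.cons_append, ← hj]⟩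
    · have ha0 : a = 0 := by omega
      have hall : ∀ x ∈ a :: t, x = 0 := by
        intro x hx
        rcases List.mem_cons.mp hx with rfl | hx
        · exact ha0
        · have := hhead x hx; omega
      refine ⟨(a :: t).length, ?_⟩
      have hrep : a :: t = List.replicate (a :: t).length 0 := List.eq_replicate_of_mem hall
      rw [hrep]
      have : (List.replicate (a :: t).length 0).filter (fun x => decide (0 < x)) = [] := by
        simp
      rw [this, List.nil_append, List.length_replicate]

lemma getD_replicate_zero (j i : ℕ) : (List.replicate j (0:ℕ)).getD i 0 = 0 := by
  rcases lt_or_ge i j with h | h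
  · rw [List.getD_eq_getElem _ _ (by simpa using h)]; simp
  · exact List.getD_eq_default _ _ (by simpa using h)

lemma part_filter_map_range (g : ℕ → ℕ) (n : ℕ) (hg : Antitone g)
    (h0 : ∀ i, n ≤ i → g i = 0) (i : ℕ) :
    part ↑(((List.range n).map g).filter (fun x => decide (0 < x))) i = g i := by
  set L0 := (List.range n).map g with hL0
  have hsort : L0.Pairwise (· ≥ ·) := by
    refine List.Pairwise.map g (fun a b hab => hg (le_of_lt hab)) ?_
    exact List.pairwise_lt_range (n := n)
  set F := L0.filter (fun x => decide (0 < x)) with hF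
  have hFsort : F.Pairwise (· ≥ ·) := hsort.filter _
  obtain ⟨j, hj⟩ := exists_replicate hsort
  have hparts : parts ↑F = F := parts_coe hFsort
  have hlen : L0.length = n := by simp [hL0]
  have hgetL0 : ∀ k, k < n → L0.getD k 0 = g k := by
    intro k hk
    rw [List.getD_eq_getElem _ _ (by omega)]
    simp [hL0]
  rw [part, hparts]
  rcases lt_or_ge i F.length with hi | hi
  · have hin : i < n := by
      have : F.length ≤ L0.length := List.length_filter_le _ _
      omega
    rw [← hgetL0 i hin, hj, List.getD_append _ _ _ _ hi]
  · rw [List.getD_eq_default _ _ hi]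
    rcases le_or_gt n i with h | h
    · exact (h0 i h).symm
    · have : L0.getD i 0 = 0 := by
        rw [hj, List.getD_append_right _ _ _ _ hi, getD_replicate_zero]
      rw [← hgetL0 i h, this]

lemma part_psAdd (l m : Multiset ℕ) (i : ℕ) :
    part (psAdd l m) i = part l i + part m i := by
  have : psAdd l m = ↑(((List.range (Multiset.card l + Multiset.card m)).map
      (fun i => part l i + part m i)).filter (fun x => decide (0 < x))) := rfl
  rw [this]
  apply part_filter_map_range
  · exact fun a b hab => add_le_add (part_antitone l hab) (part_antitone m hab)
  · intro i hi
    rw [part_eq_zero (by omega), part_eq_zero (by omega)]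

lemma psum_psAdd (l m : Multiset ℕ) (k : ℕ) :
    psum (psAdd l m) k = psum l k + psum m k := by
  simp only [psum, part_psAdd]
  exact Finset.sum_add_distrib

lemma sum_range_getD (L : List ℕ) (k : ℕ) :
    ∑ i ∈ Finset.range k, L.getD i 0 = (L.take k).sum := by
  induction k with
  | zero => simp
  | succ k ih =>
    rw [Finset.sum_range_succ, ih, List.take_succ, List.sum_append]
    congr 1
    rw [List.getD_eq_getElem?_getD]
    cases L[k]? <;> simp

lemma psum_coe {L : List ℕ} (h : L.Pairwise (· ≥ ·)) (k : ℕ) :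
    psum ↑L k = (L.take k).sum := by
  simp only [psum, part, parts_coe h]
  exact sum_range_getD L k

lemma psum_sPart {z : ℕ} (hz : 1 ≤ z) (m k : ℕ) :
    psum (sPart m z) k = min m (k * z) := by
  set a := m / z with ha
  set b := m % z with hb
  have hbz : b < z := Nat.mod_lt _ (by omega)
  have hm : a * z + b = m := by
    rw [ha, hb, mul_comm]; exact Nat.div_add_mod m z
  have haz : a * z ≤ m := by omega
  by_cases hb0 : b = 0
  · have hcoe : sPart m z = ↑(List.replicate a z) := by
      rw [sPart, ← ha, ← hb, if_pos hb0, add_zero, ← Multiset.coe_replicate]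
    have hsort : (List.replicate a z).Pairwise (· ≥ ·) :=
      List.pairwise_replicate.2 (Or.inr le_rfl)
    rw [hcoe, psum_coe hsort, List.take_replicate]
    rw [List.sum_replicate, smul_eq_mul]
    rcases le_total k a with h | h
    · have hkm : k * z ≤ m := le_trans (Nat.mul_le_mul_right z h) haz
      rw [min_eq_left h, min_eq_right hkm]
    · have hmk : m ≤ k * z := by
        calc m = a * z := by omega
          _ ≤ k * z := Nat.mul_le_mul_right z h
      rw [min_eq_right h, min_eq_left hmk]
      omega
  · have hcoe : sPart m z = ↑(List.replicate a z ++ [b]) := by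
      rw [sPart, ← ha, ← hb, if_neg hb0, ← Multiset.coe_replicate]
      rfl
    have hsort : (List.replicate a z ++ [b]).Pairwise (· ≥ ·) := by
      rw [List.pairwise_append]
      refine ⟨List.pairwise_replicate.2 (Or.inr le_rfl), List.pairwise_singleton _ _, ?_⟩
      intro x hx y hy
      rw [List.eq_of_mem_replicate hx, List.mem_singleton.mp hy]
      omega
    rw [hcoe, psum_coe hsort]
    rcases le_or_gt k a with h | h
    · rw [List.take_append, List.length_replicate,
        Nat.sub_eq_zero_of_le h, List.take_zero, List.append_nil,
        List.take_replicate, min_eq_left h, List.sum_replicate, smul_eq_mul]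
      have hkm : k * z ≤ m := le_trans (Nat.mul_le_mul_right z h) haz
      rw [min_eq_right hkm]
    · have hlen : (List.replicate a z ++ [b]).length = a + 1 := by simp
      rw [List.take_of_length_le (by omega), List.sum_append, List.sum_replicate,
        smul_eq_mul, List.sum_singleton]
      have hmk : m ≤ k * z := by
        calc m = a * z + b := hm.symm
          _ ≤ a * z + z := by omega
          _ = (a + 1) * z := by ring
          _ ≤ k * z := Nat.mul_le_mul_right z (by omega)
      rw [min_eq_left hmk]
      omega

lemma psum_zero (k : ℕ) : psum (0 : Multiset ℕ) k = 0 := by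
  have : parts (0 : Multiset ℕ) = [] := by simp [parts]
  simp [psum, part, this]

lemma foldr_psum {z : ℕ} (hz : 1 ≤ z) (L : List ℕ) (k : ℕ) :
    psum (L.foldr (fun x acc => psAdd (sPart x z) acc) 0) k
      = (L.map (fun m => min m (k * z))).sum := by
  induction L with
  | nil => simpa using psum_zero k
  | cons a t ih =>
    rw [List.foldr_cons, psum_psAdd, psum_sPart hz, List.map_cons, List.sum_cons, ih]

lemma psum_dcom {z : ℕ} (hz : 1 ≤ z) (p : Multiset ℕ) (k : ℕ) :
    psum (dcom z p) k = (p.map (fun m => min m (k * z))).sum := by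
  rw [dcom, foldr_psum hz]
  have : ((parts p).map (fun m => min m (k * z))).sum
      = ((↑(parts p) : Multiset ℕ).map (fun m => min m (k * z))).sum := rfl
  rw [this, coe_parts]

/-- merging two parts `x, y` of a partition, with `z < x + y`, strictly
decreases `d_com^{(z)}` in the dominance order. -/
theorem stmt18 (z x y : ℕ) (t : Multiset ℕ) (hz : 1 ≤ z)
    (hx : 0 < x) (hy : 0 < y) (ht : IsPartition t) (hzxy : z < x + y) :
    StrictDom (dcom z (t + {x + y})) (dcom z (t + {x, y})) := by
  constructor
  · intro k
    rw [psum_dcom hz, psum_dcom hz]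
    simp only [Multiset.map_add, Multiset.sum_add, Multiset.insert_eq_cons,
      Multiset.map_cons, Multiset.map_singleton, Multiset.sum_cons, Multiset.sum_singleton]
    omega
  · intro h
    have h1 : psum (dcom z (t + {x + y})) 1 = psum (dcom z (t + {x, y})) 1 := by rw [h]
    rw [psum_dcom hz, psum_dcom hz] at h1
    simp only [Multiset.map_add, Multiset.sum_add, Multiset.insert_eq_cons,
      Multiset.map_cons, Multiset.map_singleton, Multiset.sum_cons, Multiset.sum_singleton,
      one_mul] at h1
    omega

end PartStmt
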